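/- arXiv:math/9412222 — 3 statements merged into one kernel-verified Lean document; each statement's English description precedes it below -/
import Mathlib

section
/- If p clones are independently assigned uniformly random k-subsets of a v-element pool set, then the probability K^(p)_j that each of j specified pools (j ≤ k) is hit by at least one clone satisfies the inclusion-exclusion identity K^(p)_j = Σ_{i=0}^{j} C(j,i) (-1)^i (C(v-i,k)/C(v,k))^p. -/
open scoped Classical
open Finset

/-- A random `k`-set: a `k`-element subset of a `v`-element pool set. -/
abbrev KSet (v k : ℕ) := {s : Finset (Fin v) // s.card = k}

/-- `Kp v k p j` is the probability, when each of `p` clones independently occupies a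
uniformly random `k`-subset of the `v` pools, that each of `j` specified pools
(taken to be the pools with index `< j`) is hit by at least one clone. -/
noncomputable def Kp (v k p j : ℕ) : ℝ :=
  ((Finset.univ.filter (fun ω : Fin p → KSet v k =>
      ∀ x : Fin v, (x : ℕ) < j → ∃ i, x ∈ (ω i).1)).card : ℝ) /
    (Fintype.card (Fin p → KSet v k) : ℝ)

lemma card_avoid (v k : ℕ) (T : Finset (Fin v)) :
    (Finset.univ.filter fun s : KSet v k => ∀ x ∈ T, x ∉ s.1).card
      = (v - T.card).choose k := by
  have h : (Finset.univ.filter fun s : KSet v k => ∀ x ∈ T, x ∉ s.1).card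
      = (Finset.powersetCard k Tᶜ).card := by
    apply Finset.card_bij (fun s _ => s.1)
    · intro s hs
      simp only [Finset.mem_filter, Finset.mem_univ, true_and] at hs
      rw [Finset.mem_powersetCard]
      exact ⟨fun x hx => Finset.mem_compl.2 (fun hT => hs x hT hx), s.2⟩
    · intro a _ b _ hab; exact Subtype.ext hab
    · intro t ht
      rw [Finset.mem_powersetCard] at ht
      refine ⟨⟨t, ht.2⟩, ?_, rfl⟩
      simp only [Finset.mem_filter, Finset.mem_univ, true_and]
      intro x hxT hxt
      exact Finset.mem_compl.1 (ht.1 hxt) hxT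
  rw [h, Finset.card_powersetCard, Finset.card_compl, Fintype.card_fin]

lemma card_pi_avoid (v k p : ℕ) (T : Finset (Fin v)) :
    (Finset.univ.filter fun ω : Fin p → KSet v k => ∀ i, ∀ x ∈ T, x ∉ (ω i).1).card
      = ((v - T.card).choose k) ^ p := by
  have h : (Finset.univ.filter fun ω : Fin p → KSet v k => ∀ i, ∀ x ∈ T, x ∉ (ω i).1)
      = Fintype.piFinset (fun _ : Fin p =>
          Finset.univ.filter fun s : KSet v k => ∀ x ∈ T, x ∉ s.1) := by
    ext ω
    simp [Fintype.mem_piFinset]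
  rw [h, Fintype.card_piFinset]
  simp [card_avoid v k T]

/-- inclusion-exclusion identity
`K^(p)_j = Σ_{i=0}^{j} C(j,i) (-1)^i (C(v-i,k)/C(v,k))^p`. -/
theorem Kp_inclusion_exclusion (v k p j : ℕ) (hk : k ≤ v) (hj : j ≤ k) :
    Kp v k p j =
      ∑ i ∈ Finset.range (j + 1),
        (j.choose i : ℝ) * (-1) ^ i * (((v - i).choose k : ℝ) / (v.choose k : ℝ)) ^ p := by
  have hjv : j ≤ v := hj.trans hk
  set J : Finset (Fin v) := Finset.univ.filter (fun x : Fin v => (x : ℕ) < j) with hJ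
  have hJcard : J.card = j := by
    rw [← Finset.card_range j]
    refine Finset.card_bij (fun x _ => (x : ℕ)) ?_ ?_ ?_
    · intro x hx
      simp only [hJ, Finset.mem_filter] at hx
      exact Finset.mem_range.2 hx.2
    · intro a _ b _ hab; exact Fin.ext hab
    · intro n hn
      refine ⟨⟨n, lt_of_lt_of_le (Finset.mem_range.1 hn) hjv⟩, ?_, rfl⟩
      simp [hJ, Finset.mem_range.1 hn]
  -- pointwise inclusion-exclusion
  have key : ∀ ω : Fin p → KSet v k,
      (∑ T ∈ J.powerset, (-1 : ℝ) ^ T.card *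
        (if (∀ i, ∀ x ∈ T, x ∉ (ω i).1) then (1:ℝ) else 0))
      = if (∀ x : Fin v, (x : ℕ) < j → ∃ i, x ∈ (ω i).1) then 1 else 0 := by
    intro ω
    set M : Finset (Fin v) := J.filter (fun x => ∀ i, x ∉ (ω i).1) with hM
    have hfil : J.powerset.filter (fun T => ∀ i, ∀ x ∈ T, x ∉ (ω i).1) = M.powerset := by
      ext T
      simp only [Finset.mem_filter, Finset.mem_powerset, hM, Finset.subset_iff,
        Finset.mem_filter]
      constructor
      · rintro ⟨h1, h2⟩ x hx
        exact ⟨h1 hx, fun i => h2 i x hx⟩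
      · intro h
        exact ⟨fun {x} hx => (h hx).1, fun i x hx => (h hx).2 i⟩
    have hsum : (∑ T ∈ M.powerset, (-1 : ℝ) ^ T.card)
        = if M = ∅ then 1 else 0 := by
      have hz := Finset.sum_powerset_neg_one_pow_card (x := M)
      have := congrArg (fun z : ℤ => (z : ℝ)) hz
      push_cast at this
      simpa using this
    have hMempty : (M = ∅) ↔ (∀ x : Fin v, (x : ℕ) < j → ∃ i, x ∈ (ω i).1) := by
      simp only [hM, Finset.filter_eq_empty_iff, hJ, Finset.mem_filter, Finset.mem_univ,
        true_and, not_forall, not_not]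
    simp_rw [mul_ite, mul_one, mul_zero, ← Finset.sum_filter]
    rw [hfil, hsum, if_congr hMempty rfl rfl]
  -- numerator identity
  have hnum : ((Finset.univ.filter (fun ω : Fin p → KSet v k =>
        ∀ x : Fin v, (x : ℕ) < j → ∃ i, x ∈ (ω i).1)).card : ℝ)
      = ∑ T ∈ J.powerset, (-1 : ℝ) ^ T.card * (((v - T.card).choose k : ℝ)) ^ p := by
    rw [Finset.card_filter]
    push_cast
    calc (∑ ω : Fin p → KSet v k, if (∀ x : Fin v, (x : ℕ) < j → ∃ i, x ∈ (ω i).1)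
            then (1:ℝ) else 0)
        = ∑ ω : Fin p → KSet v k, ∑ T ∈ J.powerset, (-1 : ℝ) ^ T.card *
            (if (∀ i, ∀ x ∈ T, x ∉ (ω i).1) then (1:ℝ) else 0) := by
          exact Finset.sum_congr rfl fun ω _ => (key ω).symm
      _ = ∑ T ∈ J.powerset, ∑ ω : Fin p → KSet v k, (-1 : ℝ) ^ T.card *
            (if (∀ i, ∀ x ∈ T, x ∉ (ω i).1) then (1:ℝ) else 0) := Finset.sum_comm
      _ = ∑ T ∈ J.powerset, (-1 : ℝ) ^ T.card * (((v - T.card).choose k : ℝ)) ^ p := by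
          refine Finset.sum_congr rfl fun T _ => ?_
          rw [← Finset.mul_sum]
          congr 1
          have : (∑ ω : Fin p → KSet v k,
              if (∀ i, ∀ x ∈ T, x ∉ (ω i).1) then (1:ℝ) else 0)
              = ((Finset.univ.filter fun ω : Fin p → KSet v k =>
                  ∀ i, ∀ x ∈ T, x ∉ (ω i).1).card : ℝ) := by
            rw [Finset.card_filter]; push_cast; rfl
          rw [this, card_pi_avoid]
          push_cast
          rfl
  -- denominator
  have hden : (Fintype.card (Fin p → KSet v k) : ℝ) = ((v.choose k : ℝ)) ^ p := by
    rw [Fintype.card_fun, Fintype.card_finset_len, Fintype.card_fin, Fintype.card_fin]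
    push_cast
    rfl
  rw [Kp, hnum, hden]
  -- group subsets by cardinality
  rw [Finset.powerset_card_disjiUnion]
  erw [Finset.sum_disjiUnion]
  rw [hJcard]
  rw [Finset.sum_div]
  refine Finset.sum_congr rfl fun i hi => ?_
  have hinner : (∑ T ∈ Finset.powersetCard i J, (-1 : ℝ) ^ T.card *
      (((v - T.card).choose k : ℝ)) ^ p)
      = (j.choose i : ℝ) * ((-1 : ℝ) ^ i * (((v - i).choose k : ℝ)) ^ p) := by
    rw [Finset.sum_congr rfl (fun T hT => by
      rw [(Finset.mem_powersetCard.1 hT).2]), Finset.sum_const, Finset.card_powersetCard,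
      hJcard, nsmul_eq_mul]
  rw [hinner, div_pow]
  ring
end

section
/- With the same setup, K^(p)_j satisfies the recursion K^(p)_j = Σ_{i=0}^{j} C(j,i) C(v-j, k-i) C(v,k)^{-1} K^(p-1)_{j-i}, with base case K^(0)_0 = 1 and K^(0)_m = 0 for m > 0. -/
open scoped Classical
open Finset

def Jset (v m : ℕ) : Finset (Fin v) := univ.filter (fun x => (x : ℕ) < m)

lemma card_Jset {v m : ℕ} (h : m ≤ v) : (Jset v m).card = m := by
  have : Jset v m = (Finset.range m).attachFin (fun x hx => lt_of_lt_of_le (mem_range.mp hx) h) := by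
    ext x; simp [Jset, Finset.mem_attachFin]
  rw [this, Finset.card_attachFin, Finset.card_range]

noncomputable def cover (v k p : ℕ) (T : Finset (Fin v)) : ℕ :=
  (univ.filter (fun ω : Fin p → KSet v k => ∀ x ∈ T, ∃ i, x ∈ (ω i).1)).card

/-- there is a permutation sending `T` to `T'` membership-wise -/
lemma exists_perm {v : ℕ} {T T' : Finset (Fin v)} (h : T.card = T'.card) :
    ∃ σ : Equiv.Perm (Fin v), ∀ x, σ x ∈ T' ↔ x ∈ T := by
  have hc : (Tᶜ).card = (T'ᶜ).card := by simp [Finset.card_compl, h]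
  let e : {x // x ∈ T} ≃ {x // x ∈ T'} := Finset.equivOfCardEq h
  let e₀ : {x // x ∈ Tᶜ} ≃ {x // x ∈ T'ᶜ} := Finset.equivOfCardEq hc
  let e' : {x // ¬ x ∈ T} ≃ {x // ¬ x ∈ T'} :=
    (Equiv.subtypeEquivRight (fun x => (Finset.mem_compl).symm)).trans
      (e₀.trans (Equiv.subtypeEquivRight fun x => Finset.mem_compl))
  refine ⟨(Equiv.sumCompl (· ∈ T)).symm.trans ((e.sumCongr e').trans (Equiv.sumCompl (· ∈ T'))), ?_⟩
  intro x
  by_cases hx : x ∈ T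
  · simp only [Equiv.trans_apply, Equiv.sumCompl_symm_apply_of_pos hx, Equiv.sumCongr_apply,
      Sum.map_inl, Equiv.sumCompl_apply_inl]
    exact iff_of_true (e ⟨x, hx⟩).2 hx
  · simp only [Equiv.trans_apply, Equiv.sumCompl_symm_apply_of_neg hx, Equiv.sumCongr_apply,
      Sum.map_inr, Equiv.sumCompl_apply_inr]
    exact iff_of_false (e' ⟨x, hx⟩).2 hx

lemma cover_eq_of_card_eq {v k p : ℕ} {T T' : Finset (Fin v)} (h : T.card = T'.card) :
    cover v k p T = cover v k p T' := by
  obtain ⟨σ, hσ⟩ := exists_perm h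
  unfold cover
  have F : KSet v k → KSet v k := fun s => ⟨s.1.image σ, by
    rw [Finset.card_image_of_injective _ σ.injective, s.2]⟩
  refine Finset.card_bij'
    (fun ω _ => fun i => (⟨(ω i).1.image σ, by
      rw [Finset.card_image_of_injective _ σ.injective, (ω i).2]⟩ : KSet v k))
    (fun ω _ => fun i => (⟨(ω i).1.image σ.symm, by
      rw [Finset.card_image_of_injective _ σ.symm.injective, (ω i).2]⟩ : KSet v k))
    ?_ ?_ ?_ ?_
  · intro ω hω
    simp only [Finset.mem_filter, Finset.mem_univ, true_and] at hω ⊢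
    intro x hx
    obtain ⟨i, hi⟩ := hω (σ.symm x) (by rw [← hσ (σ.symm x), Equiv.apply_symm_apply]; exact hx)
    exact ⟨i, Finset.mem_image.mpr ⟨_, hi, Equiv.apply_symm_apply _ _⟩⟩
  · intro ω hω
    simp only [Finset.mem_filter, Finset.mem_univ, true_and] at hω ⊢
    intro x hx
    obtain ⟨i, hi⟩ := hω (σ x) ((hσ x).mpr hx)
    exact ⟨i, Finset.mem_image.mpr ⟨_, hi, Equiv.symm_apply_apply _ _⟩⟩
  · intro ω hω
    funext i
    ext y
    simp [Finset.mem_image]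
  · intro ω hω
    funext i
    ext y
    simp [Finset.mem_image]




lemma cover_succ (v k p : ℕ) (T : Finset (Fin v)) :
    cover v k (p + 1) T = ∑ s : KSet v k, cover v k p (T \ s.1) := by
  unfold cover
  rw [Finset.card_eq_sum_card_fiberwise (f := fun ω : Fin (p+1) → KSet v k => ω 0)
    (t := Finset.univ) (fun x _ => Finset.mem_univ _)]
  refine Finset.sum_congr rfl fun s _ => ?_
  refine Finset.card_bij'
    (fun ω _ => Fin.tail ω) (fun ω _ => Fin.cons s ω) ?_ ?_ ?_ ?_
  · intro ω hω
    simp only [Finset.mem_filter, Finset.mem_univ, true_and] at hω ⊢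
    obtain ⟨h1, h2⟩ := hω
    intro x hx
    rw [Finset.mem_sdiff] at hx
    obtain ⟨i, hi⟩ := h1 x hx.1
    rcases Fin.eq_zero_or_eq_succ i with rfl | ⟨i', rfl⟩
    · exact absurd (h2 ▸ hi) hx.2
    · exact ⟨i', hi⟩
  · intro ω hω
    simp only [Finset.mem_filter, Finset.mem_univ, true_and] at hω ⊢
    refine ⟨fun x hx => ?_, rfl⟩
    by_cases hxs : x ∈ s.1
    · exact ⟨0, hxs⟩
    · obtain ⟨i, hi⟩ := hω x (Finset.mem_sdiff.mpr ⟨hx, hxs⟩)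
      exact ⟨i.succ, hi⟩
  · intro ω hω
    simp only [Finset.mem_filter, Finset.mem_univ, true_and] at hω
    show Fin.cons s (Fin.tail ω) = ω
    rw [← hω.2]
    exact Fin.cons_self_tail ω
  · intro ω _
    simp

lemma count_inter {v k j i : ℕ} {T t : Finset (Fin v)} (hT : T.card = j) (ht : t ⊆ T)
    (hti : t.card = i) (hik : i ≤ k) :
    (univ.filter (fun s : KSet v k => s.1 ∩ T = t)).card = (v - j).choose (k - i) := by
  have : (Tᶜ.powersetCard (k - i)).card = (v - j).choose (k - i) := by
    rw [Finset.card_powersetCard, Finset.card_compl, Fintype.card_fin, hT]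
  rw [← this]
  refine Finset.card_bij (fun s _ => s.1 \ T) ?_ ?_ ?_
  · intro s hs
    simp only [Finset.mem_filter, Finset.mem_univ, true_and] at hs
    rw [Finset.mem_powersetCard]
    constructor
    · intro x hx
      rw [Finset.mem_sdiff] at hx
      exact Finset.mem_compl.mpr hx.2
    · have h1 : (s.1 \ T).card + (s.1 ∩ T).card = s.1.card := Finset.card_sdiff_add_card_inter _ _
      rw [hs, hti, s.2] at h1
      omega
  · intro s1 h1 s2 h2 h
    simp only [Finset.mem_filter, Finset.mem_univ, true_and] at h1 h2
    apply Subtype.ext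
    have e1 : s1.1 = s1.1 \ T ∪ t := by rw [← h1, Finset.sdiff_union_inter]
    have e2 : s2.1 = s2.1 \ T ∪ t := by rw [← h2, Finset.sdiff_union_inter]
    rw [e1, e2, h]
  · intro u hu
    rw [Finset.mem_powersetCard] at hu
    have hdisj : Disjoint t u := by
      refine Finset.disjoint_left.mpr fun x hx hxu => ?_
      exact (Finset.mem_compl.mp (hu.1 hxu)) (ht hx)
    have hcard : (t ∪ u).card = k := by
      rw [Finset.card_union_of_disjoint hdisj, hti, hu.2]
      omega
    refine ⟨⟨t ∪ u, hcard⟩, Finset.mem_filter.mpr ⟨Finset.mem_univ _, ?_⟩, ?_⟩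
    all_goals dsimp only
    · show (t ∪ u) ∩ T = t
      ext x
      simp only [Finset.mem_inter, Finset.mem_union]
      constructor
      · rintro ⟨hx | hx, hxT⟩
        · exact hx
        · exact absurd hxT (Finset.mem_compl.mp (hu.1 hx))
      · intro hx
        exact ⟨Or.inl hx, ht hx⟩
    · show (t ∪ u) \ T = u
      ext x
      simp only [Finset.mem_sdiff, Finset.mem_union]
      constructor
      · rintro ⟨hx | hx, hxT⟩
        · exact absurd (ht hx) hxT
        · exact hx
      · intro hx
        exact ⟨Or.inr hx, Finset.mem_compl.mp (hu.1 hx)⟩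

lemma card_KSetFun (v k p : ℕ) :
    Fintype.card (Fin p → KSet v k) = (v.choose k) ^ p := by
  rw [Fintype.card_fun, Fintype.card_finset_len, Fintype.card_fin, Fintype.card_fin]

lemma Kp_eq_cover (v k p m : ℕ) :
    Kp v k p m = (cover v k p (Jset v m) : ℝ) / ((v.choose k : ℝ)) ^ p := by
  unfold Kp cover
  have hfilt : (univ.filter (fun ω : Fin p → KSet v k =>
      ∀ x : Fin v, (x : ℕ) < m → ∃ i, x ∈ (ω i).1)) =
      (univ.filter (fun ω : Fin p → KSet v k => ∀ x ∈ Jset v m, ∃ i, x ∈ (ω i).1)) := by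
    apply Finset.filter_congr
    intro ω _
    simp [Jset]
  rw [hfilt, card_KSetFun]
  push_cast
  ring

lemma count_card {v k j i : ℕ} (hjv : j ≤ v) (hik : i ≤ k) :
    (univ.filter fun s : KSet v k => (s.1 ∩ Jset v j).card = i).card =
      j.choose i * (v - j).choose (k - i) := by
  set J := Jset v j with hJdef
  have hJ : J.card = j := card_Jset hjv
  rw [Finset.card_eq_sum_card_fiberwise (f := fun s : KSet v k => s.1 ∩ J)
    (t := J.powersetCard i) ?_]
  · have hstep : ∀ t ∈ J.powersetCard i,
        (Finset.filter (fun s : KSet v k => s.1 ∩ J = t)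
          (univ.filter fun s : KSet v k => (s.1 ∩ J).card = i)).card =
        (v - j).choose (k - i) := by
      intro t ht
      rw [Finset.mem_powersetCard] at ht
      have : (Finset.filter (fun s : KSet v k => s.1 ∩ J = t)
          (univ.filter fun s : KSet v k => (s.1 ∩ J).card = i)) =
          (univ.filter fun s : KSet v k => s.1 ∩ J = t) := by
        rw [Finset.filter_filter]
        apply Finset.filter_congr
        intro s _
        constructor
        · exact fun h => h.2
        · exact fun h => ⟨by rw [h, ht.2], h⟩
      rw [this]
      exact count_inter hJ ht.1 ht.2 hik
    rw [Finset.sum_congr rfl hstep, Finset.sum_const, Finset.card_powersetCard, hJ,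
      smul_eq_mul]
  · intro s hs
    simp only [Finset.mem_coe, Finset.mem_filter, Finset.mem_univ, true_and] at hs
    rw [Finset.mem_coe, Finset.mem_powersetCard]
    exact ⟨Finset.inter_subset_right, hs⟩

lemma cover_rec {v k : ℕ} (hk : k ≤ v) (p : ℕ) {j : ℕ} (hj : j ≤ k) :
    cover v k (p + 1) (Jset v j) =
      ∑ i ∈ Finset.range (j + 1),
        j.choose i * ((v - j).choose (k - i)) * cover v k p (Jset v (j - i)) := by
  have hjv : j ≤ v := hj.trans hk
  set J := Jset v j with hJdef
  have hJ : J.card = j := card_Jset hjv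
  rw [cover_succ]
  have hterm : ∀ s : KSet v k,
      cover v k p (J \ s.1) = cover v k p (Jset v (j - (s.1 ∩ J).card)) := by
    intro s
    apply cover_eq_of_card_eq
    have he : J \ s.1 = J \ (J ∩ s.1) := by
      ext x; simp
    rw [he, Finset.card_sdiff_of_subset Finset.inter_subset_left, hJ, Finset.inter_comm,
      card_Jset (by omega)]
  rw [Finset.sum_congr rfl (fun s _ => hterm s)]
  rw [← Finset.sum_fiberwise_of_maps_to (g := fun s : KSet v k => (s.1 ∩ J).card)
    (t := Finset.range (j + 1)) ?_]
  · refine Finset.sum_congr rfl fun i hi => ?_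
    rw [Finset.mem_range] at hi
    have hinner : ∀ s ∈ (univ.filter fun s : KSet v k => (s.1 ∩ J).card = i),
        cover v k p (Jset v (j - (s.1 ∩ J).card)) = cover v k p (Jset v (j - i)) := by
      intro s hs
      simp only [Finset.mem_filter, Finset.mem_univ, true_and] at hs
      rw [hs]
    rw [Finset.sum_congr rfl hinner, Finset.sum_const, smul_eq_mul,
      count_card hjv (by omega)]
  · intro s _
    rw [Finset.mem_range, Nat.lt_succ_iff, ← hJ]
    exact Finset.card_le_card Finset.inter_subset_right

/-- recursion
`K^(p)_j = Σ_{i=0}^{j} C(j,i) C(v-j,k-i) C(v,k)⁻¹ K^(p-1)_{j-i}`, with base case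
`K^(0)_0 = 1` and `K^(0)_m = 0` for `m > 0`. -/
theorem Kp_recursion (v k : ℕ) (hk : k ≤ v) :
    (∀ p j : ℕ, j ≤ k →
        Kp v k (p + 1) j =
          ∑ i ∈ Finset.range (j + 1),
            (j.choose i : ℝ) * ((v - j).choose (k - i) : ℝ) / (v.choose k : ℝ) *
              Kp v k p (j - i)) ∧
      Kp v k 0 0 = 1 ∧ ∀ m : ℕ, 0 < m → m ≤ v → Kp v k 0 m = 0 := by
  have hN : (0 : ℝ) < (v.choose k : ℝ) := by exact_mod_cast Nat.choose_pos hk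
  refine ⟨?_, ?_, ?_⟩
  · intro p j hj
    rw [Kp_eq_cover, cover_rec hk p hj]
    push_cast
    rw [Finset.sum_div]
    refine Finset.sum_congr rfl fun i hi => ?_
    rw [Kp_eq_cover]
    rw [pow_succ]
    ring
  · have hfilt : (univ.filter (fun ω : Fin 0 → KSet v k =>
        ∀ x : Fin v, (x : ℕ) < 0 → ∃ i, x ∈ (ω i).1)) = univ := by
      apply Finset.filter_true_of_mem
      intro ω _ x hx
      exact absurd hx (Nat.not_lt_zero _)
    rw [Kp, hfilt, Finset.card_univ, div_self]
    rw [card_KSetFun]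
    norm_num
  · intro m hm hmv
    have hfilt : (univ.filter (fun ω : Fin 0 → KSet v k =>
        ∀ x : Fin v, (x : ℕ) < m → ∃ i, x ∈ (ω i).1)) = ∅ := by
      rw [Finset.filter_eq_empty_iff]
      intro ω _
      intro h
      obtain ⟨i, -⟩ := h ⟨0, lt_of_lt_of_le hm hmv⟩ hm
      exact i.elim0
    rw [Kp, hfilt]
    simp
end

section
/- The events that distinct pools are negative are negatively correlated: for p independent random k-sets in v pools and any j ≤ k specified pools, the probability K^(p)_j that all j specified pools are hit is at most (1 - (1 - k/v)^p)^j, i.e., the 'independent pools' formula is an upper bound on K^(p)_j. -/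
open scoped Classical
open Finset

/-- Double-counting/swap lemma: for `g` monotone under replacing `t` by a fresh element,
the `g`-weight of `k`-sets containing `t`, times `v - k`, is at most the `g`-weight of
`k`-sets avoiding `t`, times `k`. -/
lemma swap_count {v k : ℕ} (t : Fin v) (g : Finset (Fin v) → ℕ)
    (hg : ∀ (S : Finset (Fin v)) (y : Fin v), S.card = k → t ∈ S → y ∉ S →
      g S ≤ g (insert y (S.erase t))) :
    (∑ S ∈ (powersetCard k (univ : Finset (Fin v))).filter (fun S => t ∈ S), g S) * (v - k) ≤
    (∑ S ∈ (powersetCard k (univ : Finset (Fin v))).filter (fun S => t ∉ S), g S) * k := by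
  classical
  set A := (powersetCard k (univ : Finset (Fin v))).filter (fun S => t ∈ S) with hA
  set B := (powersetCard k (univ : Finset (Fin v))).filter (fun S => t ∉ S) with hB
  have hmemA : ∀ S : Finset (Fin v), S ∈ A ↔ (S.card = k ∧ t ∈ S) := by
    intro S; rw [hA]; simp [Finset.mem_powersetCard]
  have hmemB : ∀ S : Finset (Fin v), S ∈ B ↔ (S.card = k ∧ t ∉ S) := by
    intro S; rw [hB]; simp [Finset.mem_powersetCard]
  have hcard' : ∀ (S : Finset (Fin v)) (y : Fin v), S.card = k → t ∈ S → y ∉ S →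
      (insert y (S.erase t)).card = k := by
    intro S y hSk htS hyS
    have hy : y ∉ S.erase t := fun h => hyS (Finset.mem_of_mem_erase h)
    have hk1 : 0 < S.card := Finset.card_pos.2 ⟨t, htS⟩
    rw [Finset.card_insert_of_notMem hy, Finset.card_erase_of_mem htS, hSk]
    omega
  calc (∑ S ∈ A, g S) * (v - k)
      = ∑ S ∈ A, ∑ _y ∈ (univ : Finset (Fin v)) \ S, g S := by
        rw [Finset.sum_mul]
        refine Finset.sum_congr rfl fun S hS => ?_
        rw [Finset.sum_const, smul_eq_mul, mul_comm]
        congr 1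
        rw [Finset.card_sdiff_of_subset (Finset.subset_univ S), Finset.card_univ, Fintype.card_fin,
          ((hmemA S).1 hS).1]
    _ ≤ ∑ S ∈ A, ∑ y ∈ (univ : Finset (Fin v)) \ S, g (insert y (S.erase t)) := by
        refine Finset.sum_le_sum fun S hS => Finset.sum_le_sum fun y hy => ?_
        obtain ⟨hSk, htS⟩ := (hmemA S).1 hS
        exact hg S y hSk htS (by simpa using (Finset.mem_sdiff.1 hy).2)
    _ = ∑ S ∈ B, ∑ _y ∈ S, g S := by
        rw [Finset.sum_sigma', Finset.sum_sigma']
        refine Finset.sum_bij' (fun x hx => ⟨insert x.2 (x.1.erase t), x.2⟩)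
          (fun x hx => ⟨insert t (x.1.erase x.2), x.2⟩) ?_ ?_ ?_ ?_ ?_
        · rintro ⟨S, y⟩ hx
          rw [Finset.mem_sigma] at hx ⊢
          obtain ⟨hSA, hy⟩ := hx
          obtain ⟨hSk, htS⟩ := (hmemA S).1 hSA
          have hyS : y ∉ S := by simpa using (Finset.mem_sdiff.1 hy).2
          have hty : t ≠ y := fun h => hyS (h ▸ htS)
          refine ⟨(hmemB _).2 ⟨hcard' S y hSk htS hyS, ?_⟩, Finset.mem_insert_self _ _⟩
          simp only [Finset.mem_insert, Finset.mem_erase, not_or]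
          exact ⟨hty, fun h => h.1 rfl⟩
        · rintro ⟨S, y⟩ hx
          rw [Finset.mem_sigma] at hx ⊢
          obtain ⟨hSB, hy⟩ := hx
          obtain ⟨hSk, htS⟩ := (hmemB S).1 hSB
          have hyt : y ≠ t := fun h => htS (h ▸ hy)
          have htE : t ∉ S.erase y := fun h => htS (Finset.mem_of_mem_erase h)
          have hk1 : 0 < S.card := Finset.card_pos.2 ⟨y, hy⟩
          constructor
          · refine (hmemA _).2 ⟨?_, Finset.mem_insert_self _ _⟩
            rw [Finset.card_insert_of_notMem htE, Finset.card_erase_of_mem hy, hSk]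
            omega
          · simp only [Finset.mem_sdiff, Finset.mem_univ, true_and, Finset.mem_insert,
              Finset.mem_erase, not_or]
            exact ⟨hyt, fun h => h.1 rfl⟩
        · rintro ⟨S, y⟩ hx
          rw [Finset.mem_sigma] at hx
          obtain ⟨hSA, hy⟩ := hx
          obtain ⟨hSk, htS⟩ := (hmemA S).1 hSA
          have hyS : y ∉ S := by simpa using (Finset.mem_sdiff.1 hy).2
          have h1 : y ∉ S.erase t := fun h => hyS (Finset.mem_of_mem_erase h)
          have hE : insert t ((insert y (S.erase t)).erase y) = S := by
            rw [Finset.erase_insert h1, Finset.insert_erase htS]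
          exact congrArg (fun X => (⟨X, y⟩ : Σ _ : Finset (Fin v), Fin v)) hE
        · rintro ⟨S, y⟩ hx
          rw [Finset.mem_sigma] at hx
          obtain ⟨hSB, hy⟩ := hx
          obtain ⟨hSk, htS⟩ := (hmemB S).1 hSB
          have htE : t ∉ S.erase y := fun h => htS (Finset.mem_of_mem_erase h)
          have hE : insert y ((insert t (S.erase y)).erase t) = S := by
            rw [Finset.erase_insert htE, Finset.insert_erase hy]
          exact congrArg (fun X => (⟨X, y⟩ : Σ _ : Finset (Fin v), Fin v)) hE
        · rintro ⟨S, y⟩ hx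
          rfl
    _ = (∑ S ∈ B, g S) * k := by
        rw [Finset.sum_mul]
        refine Finset.sum_congr rfl fun S hS => ?_
        rw [Finset.sum_const, smul_eq_mul, mul_comm, ((hmemB S).1 hS).1]

/-- Single-coordinate conditioning: for a property `D` monotone under `t`-swaps at
coordinate `i`, restricting to `t ∉ ω i` loses at most a factor `C(v-1,k)/C(v,k)`. -/
lemma step_count {v k p : ℕ} (hk1 : 1 ≤ k) (hk : k ≤ v) (t : Fin v) (i : Fin p)
    (D : (Fin p → KSet v k) → Prop)
    (hD : ∀ (ω : Fin p → KSet v k) (y : Fin v) (S' : KSet v k),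
      t ∈ (ω i).1 → y ∉ (ω i).1 → S'.1 = insert y (((ω i).1).erase t) → D ω →
      D (Function.update ω i S')) :
    Nat.card {ω : Fin p → KSet v k // D ω} * ((v - 1).choose k) ≤
    Nat.card {ω : Fin p → KSet v k // D ω ∧ t ∉ (ω i).1} * (v.choose k) := by
  classical
  rw [Nat.card_eq_fintype_card, Nat.card_eq_fintype_card,
    Fintype.card_of_subtype (univ.filter (fun ω : Fin p → KSet v k => D ω))
      (fun x => by simp),
    Fintype.card_of_subtype (univ.filter (fun ω : Fin p → KSet v k => D ω ∧ t ∉ (ω i).1))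
      (fun x => by simp)]
  have hsplit : (univ.filter (fun ω : Fin p → KSet v k => D ω)).card =
      (univ.filter (fun ω : Fin p → KSet v k => D ω ∧ t ∈ (ω i).1)).card +
      (univ.filter (fun ω : Fin p → KSet v k => D ω ∧ t ∉ (ω i).1)).card := by
    have h := Finset.card_filter_add_card_filter_not
      (s := univ.filter (fun ω : Fin p → KSet v k => D ω)) (fun ω => t ∈ (ω i).1)
    have e1 : (univ.filter (fun ω : Fin p → KSet v k => D ω)).filter
        (fun ω => t ∈ (ω i).1) = univ.filter (fun ω : Fin p → KSet v k =>
          D ω ∧ t ∈ (ω i).1) := by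
      ext ω
      simp only [Finset.mem_filter, Finset.mem_univ, true_and]
    have e2 : (univ.filter (fun ω : Fin p → KSet v k => D ω)).filter
        (fun ω => ¬ t ∈ (ω i).1) = univ.filter (fun ω : Fin p → KSet v k =>
          D ω ∧ t ∉ (ω i).1) := by
      ext ω
      simp only [Finset.mem_filter, Finset.mem_univ, true_and]
    rw [e1, e2] at h
    exact h.symm
  -- Pascal: N = M' + M
  have hPascal : v.choose k = (v - 1).choose (k - 1) + (v - 1).choose k := by
    have h := Nat.choose_succ_succ (v - 1) (k - 1)
    have e1 : v - 1 + 1 = v := Nat.sub_add_cancel (le_trans hk1 hk)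
    have e2 : k - 1 + 1 = k := Nat.sub_add_cancel hk1
    simp only [Nat.succ_eq_add_one, e1, e2] at h
    exact h
  -- identity: M * k = M' * (v - k)
  have hid : (v - 1).choose k * k = (v - 1).choose (k - 1) * (v - k) := by
    have h := Nat.choose_succ_right_eq (v - 1) (k - 1)
    have e2 : k - 1 + 1 = k := Nat.sub_add_cancel hk1
    have e3 : v - 1 - (k - 1) = v - k := by clear * - hk1 hk; omega
    simp only [Nat.succ_eq_add_one, e2, e3] at h
    exact h
  -- swap inequality
  have hswap : (univ.filter (fun ω : Fin p → KSet v k => D ω ∧ t ∈ (ω i).1)).card * (v - k) ≤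
      (univ.filter (fun ω : Fin p → KSet v k => D ω ∧ t ∉ (ω i).1)).card * k := by
    have hcard' : ∀ (S : Finset (Fin v)) (y : Fin v), S.card = k → t ∈ S → y ∉ S →
        (insert y (S.erase t)).card = k := by
      intro S y hSk htS hyS
      have hy : y ∉ S.erase t := fun h => hyS (Finset.mem_of_mem_erase h)
      rw [Finset.card_insert_of_notMem hy, Finset.card_erase_of_mem htS, hSk]
      exact Nat.sub_add_cancel hk1
    have hmono : ∀ (S : Finset (Fin v)) (y : Fin v), S.card = k → t ∈ S → y ∉ S →
        (univ.filter (fun ω : Fin p → KSet v k => D ω ∧ (ω i).1 = S)).card ≤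
        (univ.filter (fun ω : Fin p → KSet v k =>
          D ω ∧ (ω i).1 = insert y (S.erase t))).card := by
      intro S y hSk htS hyS
      apply Finset.card_le_card_of_injOn
        (fun ω => Function.update ω i ⟨insert y (S.erase t), hcard' S y hSk htS hyS⟩)
      · intro ω hω
        simp only [Finset.mem_coe, Finset.mem_filter, Finset.mem_univ, true_and] at hω ⊢
        obtain ⟨hDω, hωi⟩ := hω
        refine ⟨hD ω y ⟨insert y (S.erase t), hcard' S y hSk htS hyS⟩
          (hωi ▸ htS) (hωi ▸ hyS) (by simp [hωi]) hDω, ?_⟩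
        rw [Function.update_self]
      · intro ω1 h1 ω2 h2 heq
        simp only [Finset.coe_filter, Set.mem_setOf_eq, Finset.mem_univ, true_and] at h1 h2
        funext i'
        by_cases hii : i' = i
        · subst hii
          exact Subtype.ext (h1.2.trans h2.2.symm)
        · have h3 := congrFun heq i'
          simp only [Function.update_of_ne hii] at h3
          exact h3
    have hfa : (univ.filter (fun ω : Fin p → KSet v k => D ω ∧ t ∈ (ω i).1)).card =
        ∑ S ∈ (powersetCard k (univ : Finset (Fin v))).filter (fun S => t ∈ S),
          (univ.filter (fun ω : Fin p → KSet v k => D ω ∧ (ω i).1 = S)).card := by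
      have h := Finset.card_eq_sum_card_fiberwise
        (s := univ.filter (fun ω : Fin p → KSet v k => D ω ∧ t ∈ (ω i).1))
        (t := (powersetCard k (univ : Finset (Fin v))).filter (fun S => t ∈ S))
        (f := fun ω : Fin p → KSet v k => (ω i).1)
        (fun ω hω => by
          simp only [Finset.mem_coe, Finset.mem_filter, Finset.mem_univ, true_and] at hω
          simp [Finset.mem_powersetCard, (ω i).2, hω.2])
      rw [h]
      refine Finset.sum_congr rfl fun S hS => ?_
      simp only [Finset.mem_filter, Finset.mem_powersetCard] at hS
      congr 1
      ext ω
      simp only [Finset.mem_filter, Finset.mem_univ, true_and]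
      constructor
      · rintro ⟨⟨hDω, _⟩, h'⟩; exact ⟨hDω, h'⟩
      · rintro ⟨hDω, h'⟩; exact ⟨⟨hDω, h' ▸ hS.2⟩, h'⟩
    have hfb : (univ.filter (fun ω : Fin p → KSet v k => D ω ∧ t ∉ (ω i).1)).card =
        ∑ S ∈ (powersetCard k (univ : Finset (Fin v))).filter (fun S => t ∉ S),
          (univ.filter (fun ω : Fin p → KSet v k => D ω ∧ (ω i).1 = S)).card := by
      have h := Finset.card_eq_sum_card_fiberwise
        (s := univ.filter (fun ω : Fin p → KSet v k => D ω ∧ t ∉ (ω i).1))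
        (t := (powersetCard k (univ : Finset (Fin v))).filter (fun S => t ∉ S))
        (f := fun ω : Fin p → KSet v k => (ω i).1)
        (fun ω hω => by
          simp only [Finset.mem_coe, Finset.mem_filter, Finset.mem_univ, true_and] at hω
          simp [Finset.mem_powersetCard, (ω i).2, hω.2])
      rw [h]
      refine Finset.sum_congr rfl fun S hS => ?_
      simp only [Finset.mem_filter, Finset.mem_powersetCard] at hS
      congr 1
      ext ω
      simp only [Finset.mem_filter, Finset.mem_univ, true_and]
      constructor
      · rintro ⟨⟨hDω, _⟩, h'⟩; exact ⟨hDω, h'⟩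
      · rintro ⟨hDω, h'⟩; exact ⟨⟨hDω, h' ▸ hS.2⟩, h'⟩
    rw [hfa, hfb]
    refine swap_count t _ ?_
    intro S y hSk htS hyS
    exact hmono S y hSk htS hyS
  -- combine: a * M ≤ b * M'
  have hkey : (univ.filter (fun ω : Fin p → KSet v k => D ω ∧ t ∈ (ω i).1)).card *
      ((v - 1).choose k) ≤
      (univ.filter (fun ω : Fin p → KSet v k => D ω ∧ t ∉ (ω i).1)).card *
      ((v - 1).choose (k - 1)) := by
    set a := (univ.filter (fun ω : Fin p → KSet v k => D ω ∧ t ∈ (ω i).1)).card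
    set b := (univ.filter (fun ω : Fin p → KSet v k => D ω ∧ t ∉ (ω i).1)).card
    have h1 : a * ((v - 1).choose k) * k ≤ b * ((v - 1).choose (k - 1)) * k := by
      calc a * ((v - 1).choose k) * k = a * ((v - 1).choose k * k) := by ring
        _ = a * ((v - 1).choose (k - 1) * (v - k)) := by rw [hid]
        _ = a * (v - k) * ((v - 1).choose (k - 1)) := by ring
        _ ≤ b * k * ((v - 1).choose (k - 1)) := Nat.mul_le_mul_right _ hswap
        _ = b * ((v - 1).choose (k - 1)) * k := by ring
    exact Nat.le_of_mul_le_mul_right h1 hk1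
  calc (univ.filter (fun ω : Fin p → KSet v k => D ω)).card * ((v - 1).choose k)
      = (univ.filter (fun ω : Fin p → KSet v k => D ω ∧ t ∈ (ω i).1)).card *
          ((v - 1).choose k) +
        (univ.filter (fun ω : Fin p → KSet v k => D ω ∧ t ∉ (ω i).1)).card *
          ((v - 1).choose k) := by rw [hsplit]; ring
    _ ≤ (univ.filter (fun ω : Fin p → KSet v k => D ω ∧ t ∉ (ω i).1)).card *
          ((v - 1).choose (k - 1)) +
        (univ.filter (fun ω : Fin p → KSet v k => D ω ∧ t ∉ (ω i).1)).card *
          ((v - 1).choose k) := Nat.add_le_add_right hkey _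
    _ = (univ.filter (fun ω : Fin p → KSet v k => D ω ∧ t ∉ (ω i).1)).card *
          (v.choose k) := by rw [hPascal]; ring

/-- Multi-coordinate version: over any set `T` of clones. -/
lemma multi_count {v k p : ℕ} (hk1 : 1 ≤ k) (hk : k ≤ v) (t : Fin v)
    (C : (Fin p → KSet v k) → Prop)
    (hC : ∀ (ω : Fin p → KSet v k) (i : Fin p) (y : Fin v) (S' : KSet v k),
      t ∈ (ω i).1 → y ∉ (ω i).1 → S'.1 = insert y (((ω i).1).erase t) → C ω →
      C (Function.update ω i S'))
    (T : Finset (Fin p)) :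
    Nat.card {ω : Fin p → KSet v k // C ω} * ((v - 1).choose k) ^ T.card ≤
    Nat.card {ω : Fin p → KSet v k // C ω ∧ ∀ i ∈ T, t ∉ (ω i).1} *
      (v.choose k) ^ T.card := by
  classical
  induction T using Finset.induction_on with
  | empty =>
    simp only [Finset.card_empty, pow_zero, mul_one, Finset.notMem_empty]
    apply Nat.le_of_eq
    apply Nat.card_congr
    apply Equiv.subtypeEquivRight
    intro ω
    simp
  | @insert i T hiT ih =>
    have hstep := step_count hk1 hk t i
      (fun ω => C ω ∧ ∀ i' ∈ T, t ∉ (ω i').1)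
      (by
        rintro ω y S' hty hy hS' ⟨hCω, hT⟩
        refine ⟨hC ω i y S' hty hy hS' hCω, ?_⟩
        intro i' hi'
        have hne : i' ≠ i := fun h => hiT (h ▸ hi')
        rw [Function.update_of_ne hne]
        exact hT i' hi')
    have hfin : Nat.card {ω : Fin p → KSet v k //
          (C ω ∧ ∀ i' ∈ T, t ∉ (ω i').1) ∧ t ∉ (ω i).1} =
        Nat.card {ω : Fin p → KSet v k // C ω ∧ ∀ i' ∈ insert i T, t ∉ (ω i').1} := by
      apply Nat.card_congr
      apply Equiv.subtypeEquivRight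
      intro ω
      simp only [Finset.mem_insert]
      constructor
      · rintro ⟨⟨hCω, hT⟩, hti⟩
        exact ⟨hCω, fun i' hi' => hi'.elim (fun h => h ▸ hti) (hT i')⟩
      · rintro ⟨hCω, hT⟩
        exact ⟨⟨hCω, fun i' hi' => hT i' (Or.inr hi')⟩, hT i (Or.inl rfl)⟩
    rw [Finset.card_insert_of_notMem hiT, pow_succ, pow_succ]
    calc Nat.card {ω : Fin p → KSet v k // C ω} *
          (((v - 1).choose k) ^ T.card * (v - 1).choose k)
        = (Nat.card {ω : Fin p → KSet v k // C ω} *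
            ((v - 1).choose k) ^ T.card) * (v - 1).choose k := by ring
      _ ≤ (Nat.card {ω : Fin p → KSet v k // C ω ∧ ∀ i' ∈ T, t ∉ (ω i').1} *
            (v.choose k) ^ T.card) * (v - 1).choose k := Nat.mul_le_mul_right _ ih
      _ = (Nat.card {ω : Fin p → KSet v k // C ω ∧ ∀ i' ∈ T, t ∉ (ω i').1} *
            (v - 1).choose k) * (v.choose k) ^ T.card := by ring
      _ ≤ (Nat.card {ω : Fin p → KSet v k //
            (C ω ∧ ∀ i' ∈ T, t ∉ (ω i').1) ∧ t ∉ (ω i).1} * (v.choose k)) *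
            (v.choose k) ^ T.card := Nat.mul_le_mul_right _ hstep
      _ = Nat.card {ω : Fin p → KSet v k // C ω ∧ ∀ i' ∈ insert i T, t ∉ (ω i').1} *
            ((v.choose k) ^ T.card * v.choose k) := by rw [hfin]; ring

/-- the 'independent pools' formula is an upper bound:
`K^(p)_j ≤ (1 - (1 - k/v)^p)^j`. -/
theorem Kp_le_independent_pools (v k p j : ℕ) (hk1 : 1 ≤ k) (hk : k ≤ v) (hj : j ≤ k) :
    Kp v k p j ≤ (1 - (1 - (k : ℝ) / (v : ℝ)) ^ p) ^ j := by
  classical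
  have hv : 0 < v := lt_of_lt_of_le hk1 hk
  have hNpos : 0 < v.choose k := Nat.choose_pos hk
  have hcardΩ : (Fintype.card (Fin p → KSet v k)) = (v.choose k) ^ p := by
    rw [Fintype.card_fun, Fintype.card_fin, Fintype.card_finset_len, Fintype.card_fin]
  have hNPpos : (0:ℝ) < ((v.choose k : ℕ) : ℝ) ^ p := by positivity
  -- the ratio identity: v * M = N * (v - k)
  have hratio : v * ((v - 1).choose k) = (v.choose k) * (v - k) := by
    have h1 := Nat.add_one_mul_choose_eq (v - 1) k
    have hv1 : v - 1 + 1 = v := by omega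
    simp only [Nat.succ_eq_add_one, hv1] at h1
    have h2 := Nat.choose_succ_right_eq v k
    rw [h1, h2]
  set q : ℝ := 1 - (k : ℝ) / (v : ℝ) with hq
  have hvR : (0:ℝ) < (v:ℝ) := by exact_mod_cast hv
  have hNR : (0:ℝ) < ((v.choose k : ℕ) : ℝ) := by exact_mod_cast hNpos
  have hq0 : 0 ≤ q := by
    rw [hq, sub_nonneg, div_le_one hvR]
    exact_mod_cast hk
  have hq1 : q ≤ 1 := by
    rw [hq]
    have h : (0:ℝ) ≤ (k : ℝ) / (v : ℝ) := by positivity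
    linarith
  have hqMN : q = (((v-1).choose k : ℕ) : ℝ) / ((v.choose k : ℕ) : ℝ) := by
    have hcast : (v:ℝ) * (((v-1).choose k : ℕ) : ℝ) =
        ((v.choose k : ℕ) : ℝ) * ((v:ℝ) - (k:ℝ)) := by
      have h := congrArg (Nat.cast : ℕ → ℝ) hratio
      push_cast at h
      rw [Nat.cast_sub hk] at h
      exact h
    rw [hq]
    field_simp
    nlinarith [hcast]
  -- now induct on j with hypothesis j ≤ v
  have hjv0 : j ≤ v := hj.trans hk
  clear hj
  suffices h : ∀ j : ℕ, j ≤ v → Kp v k p j ≤ (1 - q ^ p) ^ j from h j hjv0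
  intro j
  induction j with
  | zero =>
    intro _
    have he : (Finset.univ.filter (fun ω : Fin p → KSet v k =>
        ∀ x : Fin v, (x : ℕ) < 0 → ∃ i, x ∈ (ω i).1)) = Finset.univ := by
      apply Finset.filter_true_of_mem
      intro ω _ x hx
      exact absurd hx (Nat.not_lt_zero _)
    have hΩ : (0:ℝ) < (Fintype.card (Fin p → KSet v k) : ℝ) := by
      rw [hcardΩ]
      exact_mod_cast pow_pos hNpos p
    rw [Kp, he, pow_zero, Finset.card_univ, div_self (ne_of_gt hΩ)]
  | succ j ih =>
    intro hjv
    have hjv' : j < v := hjv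
    set t : Fin v := ⟨j, hjv'⟩ with ht
    have hC : ∀ (ω : Fin p → KSet v k) (i : Fin p) (y : Fin v) (S' : KSet v k),
        t ∈ (ω i).1 → y ∉ (ω i).1 → S'.1 = insert y (((ω i).1).erase t) →
        (∀ x : Fin v, (x : ℕ) < j → ∃ i', x ∈ (ω i').1) →
        (∀ x : Fin v, (x : ℕ) < j → ∃ i', x ∈ ((Function.update ω i S') i').1) := by
      intro ω i y S' hti hyi hS' hCω x hx
      obtain ⟨i', hi'⟩ := hCω x hx
      by_cases hii : i' = i
      · subst hii
        refine ⟨i', ?_⟩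
        rw [Function.update_self, hS']
        have hxt : x ≠ t := by
          intro h
          have : (x : ℕ) = j := by rw [h]
          omega
        exact Finset.mem_insert_of_mem (Finset.mem_erase.2 ⟨hxt, hi'⟩)
      · exact ⟨i', by rwa [Function.update_of_ne hii]⟩
    have hmain := multi_count hk1 hk t
      (fun ω : Fin p → KSet v k => ∀ x : Fin v, (x : ℕ) < j → ∃ i', x ∈ (ω i').1)
      hC (Finset.univ : Finset (Fin p))
    rw [Finset.card_univ, Fintype.card_fin] at hmain
    -- convert filter cards to Nat.card
    have hconv : ∀ m : ℕ,
        (Finset.univ.filter (fun ω : Fin p → KSet v k =>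
          ∀ x : Fin v, (x : ℕ) < m → ∃ i', x ∈ (ω i').1)).card =
          Nat.card {ω : Fin p → KSet v k //
            ∀ x : Fin v, (x : ℕ) < m → ∃ i', x ∈ (ω i').1} := by
      intro m
      rw [Nat.card_eq_fintype_card]
      exact (Fintype.card_of_subtype _ (fun x => by simp)).symm
    have hconv2 : (Finset.univ.filter (fun ω : Fin p → KSet v k =>
          (∀ x : Fin v, (x : ℕ) < j → ∃ i', x ∈ (ω i').1) ∧
            ∀ i ∈ (Finset.univ : Finset (Fin p)), t ∉ (ω i).1)).card =
        Nat.card {ω : Fin p → KSet v k //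
          (∀ x : Fin v, (x : ℕ) < j → ∃ i', x ∈ (ω i').1) ∧
            ∀ i ∈ (Finset.univ : Finset (Fin p)), t ∉ (ω i).1} := by
      rw [Nat.card_eq_fintype_card]
      exact (Fintype.card_of_subtype _ (fun x => by simp)).symm
    -- split
    have hsplit : Nat.card {ω : Fin p → KSet v k //
          ∀ x : Fin v, (x : ℕ) < j → ∃ i', x ∈ (ω i').1} =
        Nat.card {ω : Fin p → KSet v k //
          ∀ x : Fin v, (x : ℕ) < j + 1 → ∃ i', x ∈ (ω i').1} +
        Nat.card {ω : Fin p → KSet v k //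
          (∀ x : Fin v, (x : ℕ) < j → ∃ i', x ∈ (ω i').1) ∧
            ∀ i ∈ (Finset.univ : Finset (Fin p)), t ∉ (ω i).1} := by
      rw [← hconv j, ← hconv (j + 1), ← hconv2]
      have h := Finset.card_filter_add_card_filter_not
        (s := Finset.univ.filter (fun ω : Fin p → KSet v k =>
          ∀ x : Fin v, (x : ℕ) < j → ∃ i', x ∈ (ω i').1))
        (fun ω => ∃ i', t ∈ (ω i').1)
      have e1 : (Finset.univ.filter (fun ω : Fin p → KSet v k =>
            ∀ x : Fin v, (x : ℕ) < j → ∃ i', x ∈ (ω i').1)).filter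
            (fun ω => ∃ i', t ∈ (ω i').1) =
          Finset.univ.filter (fun ω : Fin p → KSet v k =>
            ∀ x : Fin v, (x : ℕ) < j + 1 → ∃ i', x ∈ (ω i').1) := by
        ext ω
        simp only [Finset.mem_filter, Finset.mem_univ, true_and]
        constructor
        · rintro ⟨hCω, hex⟩ x hx
          by_cases hxj : (x : ℕ) < j
          · exact hCω x hxj
          · have hxt : x = t := by
              apply Fin.ext
              exact Nat.le_antisymm (Nat.lt_succ_iff.mp hx) (Nat.le_of_not_lt hxj)
            rw [hxt]
            exact hex
        · intro hω
          exact ⟨fun x hx => hω x (Nat.lt_succ_of_lt hx), hω t (Nat.lt_succ_self j)⟩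
      have e2 : (Finset.univ.filter (fun ω : Fin p → KSet v k =>
            ∀ x : Fin v, (x : ℕ) < j → ∃ i', x ∈ (ω i').1)).filter
            (fun ω => ¬ ∃ i', t ∈ (ω i').1) =
          Finset.univ.filter (fun ω : Fin p → KSet v k =>
            (∀ x : Fin v, (x : ℕ) < j → ∃ i', x ∈ (ω i').1) ∧
              ∀ i ∈ (Finset.univ : Finset (Fin p)), t ∉ (ω i).1) := by
        ext ω
        simp only [Finset.mem_filter, Finset.mem_univ, true_and, not_exists]
        tauto
      rw [e1, e2] at h
      exact h.symm
    have hqp : q ^ p = (((v-1).choose k : ℕ) : ℝ) ^ p / ((v.choose k : ℕ) : ℝ) ^ p := by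
      rw [hqMN, div_pow]
    have hmainR : (Nat.card {ω : Fin p → KSet v k //
          ∀ x : Fin v, (x : ℕ) < j → ∃ i', x ∈ (ω i').1} : ℝ) *
          (((v-1).choose k : ℕ) : ℝ) ^ p ≤
        (Nat.card {ω : Fin p → KSet v k //
          (∀ x : Fin v, (x : ℕ) < j → ∃ i', x ∈ (ω i').1) ∧
            ∀ i ∈ (Finset.univ : Finset (Fin p)), t ∉ (ω i).1} : ℝ) *
          ((v.choose k : ℕ) : ℝ) ^ p := by
      exact_mod_cast hmain
    have h2 : (Nat.card {ω : Fin p → KSet v k //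
          ∀ x : Fin v, (x : ℕ) < j → ∃ i', x ∈ (ω i').1} : ℝ) * q ^ p ≤
        (Nat.card {ω : Fin p → KSet v k //
          (∀ x : Fin v, (x : ℕ) < j → ∃ i', x ∈ (ω i').1) ∧
            ∀ i ∈ (Finset.univ : Finset (Fin p)), t ∉ (ω i).1} : ℝ) := by
      rw [hqp, ← mul_div_assoc, div_le_iff₀ hNPpos]
      exact hmainR
    have hub : (Nat.card {ω : Fin p → KSet v k //
          ∀ x : Fin v, (x : ℕ) < j + 1 → ∃ i', x ∈ (ω i').1} : ℝ) ≤
        (Nat.card {ω : Fin p → KSet v k //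
          ∀ x : Fin v, (x : ℕ) < j → ∃ i', x ∈ (ω i').1} : ℝ) * (1 - q ^ p) := by
      have h1 : (Nat.card {ω : Fin p → KSet v k //
            ∀ x : Fin v, (x : ℕ) < j → ∃ i', x ∈ (ω i').1} : ℝ) =
          (Nat.card {ω : Fin p → KSet v k //
            ∀ x : Fin v, (x : ℕ) < j + 1 → ∃ i', x ∈ (ω i').1} : ℝ) +
          (Nat.card {ω : Fin p → KSet v k //
            (∀ x : Fin v, (x : ℕ) < j → ∃ i', x ∈ (ω i').1) ∧
              ∀ i ∈ (Finset.univ : Finset (Fin p)), t ∉ (ω i).1} : ℝ) := by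
        exact_mod_cast hsplit
      nlinarith
    have hqppos : 0 ≤ 1 - q ^ p := by
      have h : q ^ p ≤ 1 := pow_le_one₀ hq0 hq1
      linarith
    have hKp : ∀ m : ℕ, Kp v k p m = (Nat.card {ω : Fin p → KSet v k //
        ∀ x : Fin v, (x : ℕ) < m → ∃ i', x ∈ (ω i').1} : ℝ) /
        ((v.choose k : ℕ) : ℝ) ^ p := by
      intro m
      rw [Kp, hcardΩ, hconv m]
      push_cast
      ring
    calc Kp v k p (j + 1)
        = (Nat.card {ω : Fin p → KSet v k //
            ∀ x : Fin v, (x : ℕ) < j + 1 → ∃ i', x ∈ (ω i').1} : ℝ) /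
            ((v.choose k : ℕ) : ℝ) ^ p := hKp (j + 1)
      _ ≤ ((Nat.card {ω : Fin p → KSet v k //
            ∀ x : Fin v, (x : ℕ) < j → ∃ i', x ∈ (ω i').1} : ℝ) * (1 - q ^ p)) /
            ((v.choose k : ℕ) : ℝ) ^ p := div_le_div_of_nonneg_right hub hNPpos.le
      _ = ((Nat.card {ω : Fin p → KSet v k //
            ∀ x : Fin v, (x : ℕ) < j → ∃ i', x ∈ (ω i').1} : ℝ) /
            ((v.choose k : ℕ) : ℝ) ^ p) * (1 - q ^ p) := by ring
      _ = Kp v k p j * (1 - q ^ p) := by rw [hKp j]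
      _ ≤ (1 - q ^ p) ^ j * (1 - q ^ p) :=
          mul_le_mul_of_nonneg_right (ih (Nat.le_of_succ_le hjv)) hqppos
      _ = (1 - q ^ p) ^ (j + 1) := by rw [pow_succ]
end
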